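/- arXiv:1004.4224 — 2 statements merged into one kernel-verified Lean document; each statement's English description precedes it below -/
import Mathlib

section
/- Let R be a graded ring of dimension d and M a finitely generated graded R-module with λ_R(M) < ∞ and pd_R(M) < ∞. Write P_R(t) = p(t)/((1-t)^d g(t)) with p(1) ≠ 0 and g(1) ≠ 0. Then (1-t)^d divides χ_M^R(t) in the Laurent polynomial ring ℤ[t, t^{-1}], where χ_M^R(t) = P_M(t)/P_R(t). -/
/-- The length of a module, realized as the Krull dimension of its lattice of submodules. -/
noncomputable def moduleLength (R M : Type*) [Semiring R] [AddCommMonoid M] [Module R M] :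
    WithBot ℕ∞ :=
  Order.krullDim (Submodule R M)

/-- `M` has a finite resolution by finitely generated free `R`-modules; this is the meaning
of `pd_R(M) < ∞` for finitely generated modules over a Noetherian ring. -/
def HasFiniteFreeResolution (R M : Type*) [CommRing R] [AddCommGroup M] [Module R M] :
    Prop :=
  ∃ (r : ℕ → ℕ) (D : ∀ i : ℕ, ((Fin (r (i + 1)) → R) →ₗ[R] (Fin (r i) → R)))
    (ε : (Fin (r 0) → R) →ₗ[R] M) (N : ℕ),
    (∀ i, N ≤ i → r i = 0) ∧ Function.Surjective ε ∧ Function.Exact (D 0) ε ∧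
      ∀ i : ℕ, Function.Exact (D (i + 1)) (D i)

/-!
Since `M` has finite length and `A` is concentrated in degrees `≥ 0`, the submodules
`M_{≥ n}` form a chain of `A`-submodules that must be constant for `n ≪ 0` and for `n ≫ 0`;
as the chain drops at every degree where `M` is nonzero, `P_M` is a Laurent polynomial.
Clearing the denominator of `P_A` turns `P_M = χ P_A` into `χ p = (1 - t)^d P_M g`, an identity
of Laurent polynomials. Evaluating at `t = 1` shows `χ(1) p(1) = 0`, hence `χ(1) = 0` and
`1 - t ∣ χ`; cancelling `1 - t` and repeating `d` times gives `(1 - t)^d ∣ χ`.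
-/

open HahnSeries
open scoped Polynomial

theorem Antitone.finite_setOf_apply_succ_ne {α : Type*} [PartialOrder α] [WellFoundedLT α]
    [WellFoundedGT α] {f : ℤ → α} (hf : Antitone f) : {n | f (n + 1) ≠ f n}.Finite := by
  obtain ⟨_, ⟨a, rfl⟩, ha⟩ := wellFounded_lt.has_min (Set.range f) (Set.range_nonempty f)
  obtain ⟨_, ⟨b, rfl⟩, hb⟩ := wellFounded_gt.has_min (Set.range f) (Set.range_nonempty f)
  have hfa : ∀ n, a ≤ n → f n = f a := fun n h => (hf h).eq_of_not_lt (ha _ ⟨n, rfl⟩)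
  have hfb : ∀ n, n ≤ b → f n = f b := fun n h => ((hf h).eq_of_not_lt (hb _ ⟨n, rfl⟩)).symm
  refine (Set.finite_Ico b a).subset fun n hn => ⟨?_, ?_⟩
  · by_contra! h
    exact hn ((hfb (n + 1) (by omega)).trans (hfb n h.le).symm)
  · by_contra! h
    exact hn ((hfa (n + 1) (by omega)).trans (hfa n h).symm)

lemma moduleLength_eq_coe_length (R M : Type*) [Ring R] [AddCommGroup M] [Module R M] :
    moduleLength R M = Module.length R M :=
  (Module.coe_length R M).symm

section GradedModule

variable {R₀ A M : Type*} [CommRing R₀] [CommRing A] [Algebra R₀ A]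
  [AddCommGroup M] [Module A M] [Module R₀ M] [IsScalarTower R₀ A M]
  (𝒜 : ℤ → Submodule R₀ A) [GradedAlgebra 𝒜] (ℳ : ℤ → Submodule R₀ M) [SetLike.GradedSMul 𝒜 ℳ]

lemma smul_mem_iSup_degree_ge (h𝒜 : ∀ i < (0 : ℤ), 𝒜 i = ⊥) (n : ℤ) (a : A) {x : M}
    (hx : x ∈ ⨆ (k : ℤ) (_ : n ≤ k), ℳ k) : a • x ∈ ⨆ (k : ℤ) (_ : n ≤ k), ℳ k := by
  classical
  rw [← DirectSum.sum_support_decompose 𝒜 a, Finset.sum_smul]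
  refine Submodule.sum_mem _ fun i _ => ?_
  have hb : (DirectSum.decompose 𝒜 a i : A) ∈ 𝒜 i := SetLike.coe_mem _
  generalize (DirectSum.decompose 𝒜 a i : A) = b at hb ⊢
  obtain hi | hi := lt_or_ge i 0
  · rw [h𝒜 i hi, Submodule.mem_bot] at hb
    rw [hb, zero_smul]
    exact zero_mem _
  · have hle : (⨆ (k : ℤ) (_ : n ≤ k), ℳ k) ≤
        (⨆ (k : ℤ) (_ : n ≤ k), ℳ k).comap (DistribSMul.toLinearMap R₀ M b) :=
      iSup₂_le fun k hk y hy => Submodule.mem_iSup_of_mem (i + k) <|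
        Submodule.mem_iSup_of_mem (by omega) (SetLike.GradedSMul.smul_mem hb hy)
    exact hle hx

/-- `M_{≥ n}`, an `A`-submodule because `A` has no components of negative degree. -/
def submoduleDegreeGE (h𝒜 : ∀ i < (0 : ℤ), 𝒜 i = ⊥) (n : ℤ) : Submodule A M where
  carrier := (⨆ (k : ℤ) (_ : n ≤ k), ℳ k : Submodule R₀ M)
  add_mem' := add_mem
  zero_mem' := zero_mem _
  smul_mem' := smul_mem_iSup_degree_ge 𝒜 ℳ h𝒜 n

variable {𝒜}

lemma antitone_submoduleDegreeGE (h𝒜 : ∀ i < (0 : ℤ), 𝒜 i = ⊥) :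
    Antitone (submoduleDegreeGE 𝒜 ℳ h𝒜) := fun _ _ hnm =>
  show (⨆ (k : ℤ) (_ : _ ≤ k), ℳ k) ≤ ⨆ (k : ℤ) (_ : _ ≤ k), ℳ k from
    iSup₂_mono' fun k hk => ⟨k, hnm.trans hk, le_rfl⟩

lemma submoduleDegreeGE_succ_ne [DirectSum.Decomposition ℳ] (h𝒜 : ∀ i < (0 : ℤ), 𝒜 i = ⊥)
    {n : ℤ} (hn : ℳ n ≠ ⊥) :
    submoduleDegreeGE 𝒜 ℳ h𝒜 (n + 1) ≠ submoduleDegreeGE 𝒜 ℳ h𝒜 n := by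
  obtain ⟨x, hxn, hx0⟩ := (Submodule.ne_bot_iff _).mp hn
  intro h
  have hx : x ∈ submoduleDegreeGE 𝒜 ℳ h𝒜 (n + 1) :=
    h ▸ Submodule.mem_iSup_of_mem n (Submodule.mem_iSup_of_mem le_rfl hxn)
  have hle : (⨆ (k : ℤ) (_ : n + 1 ≤ k), ℳ k) ≤ ⨆ (k : ℤ) (_ : k ≠ n), ℳ k :=
    iSup₂_mono' fun k hk => ⟨k, by omega, le_rfl⟩
  exact hx0 (Submodule.disjoint_def.mp
    ((DirectSum.Decomposition.isInternal ℳ).submodule_iSupIndep n) x hxn (hle hx))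

lemma finite_setOf_ne_bot [DirectSum.Decomposition ℳ] [IsNoetherian A M] [IsArtinian A M]
    (h𝒜 : ∀ i < (0 : ℤ), 𝒜 i = ⊥) : {n | ℳ n ≠ ⊥}.Finite :=
  (antitone_submoduleDegreeGE ℳ h𝒜).finite_setOf_apply_succ_ne.subset fun _ hn =>
    submoduleDegreeGE_succ_ne ℳ h𝒜 hn

end GradedModule

namespace LaurentSeries

variable {R : Type*} [CommRing R]

noncomputable def ofPolynomial : R[X] →+* LaurentSeries R :=
  (ofPowerSeries ℤ R).comp Polynomial.coeToPowerSeries.ringHom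

lemma ofPolynomial_coeff_natCast (q : R[X]) (n : ℕ) : (ofPolynomial q).coeff n = q.coeff n := by
  simp [ofPolynomial, ofPowerSeries_apply_coeff]

lemma support_ofPolynomial_subset (q : R[X]) :
    (ofPolynomial q).support ⊆ ((q.support.map Nat.castEmbedding : Finset ℤ) : Set ℤ) := by
  intro n hn
  obtain ⟨k, rfl⟩ : ∃ k : ℕ, (k : ℤ) = n := by
    by_contra! h
    refine hn ?_
    rw [ofPolynomial, RingHom.comp_apply, ofPowerSeries_apply, embDomain_of_notMem_range]
    exact fun ⟨k, hk⟩ => h k hk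
  simpa [ofPolynomial_coeff_natCast] using hn

lemma ofPolynomial_one_sub_X : ofPolynomial (1 - Polynomial.X : R[X]) = 1 - single 1 1 := by
  simp [ofPolynomial]

lemma support_finite_mul {x y : LaurentSeries R} (hx : x.support.Finite) (hy : y.support.Finite) :
    (x * y).support.Finite :=
  (hx.add hy).subset support_mul_subset

lemma support_ofPolynomial_finite (q : R[X]) : (ofPolynomial q).support.Finite :=
  (q.support.map Nat.castEmbedding).finite_toSet.subset (support_ofPolynomial_subset q)

lemma support_finite_single_mul_ofPolynomial (n : ℤ) (q : R[X]) :
    (single n 1 * ofPolynomial q).support.Finite :=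
  support_finite_mul ((Set.finite_singleton n).subset support_single_subset)
    (support_ofPolynomial_finite q)

lemma exists_eq_single_mul_ofPolynomial {x : LaurentSeries R} (hx : x.support.Finite) :
    ∃ (n : ℤ) (q : R[X]), x = single n 1 * ofPolynomial q := by
  obtain ⟨B, hB⟩ := hx.bddAbove
  set N := (B - x.order + 1).toNat
  have htrunc : x.powerSeriesPart = (PowerSeries.trunc N x.powerSeriesPart : PowerSeries R) := by
    ext k
    rw [Polynomial.coeff_coe, PowerSeries.coeff_trunc]
    split_ifs with hk
    · rfl
    · rw [powerSeriesPart_coeff]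
      by_contra h
      have := hB h
      omega
  refine ⟨x.order, PowerSeries.trunc N x.powerSeriesPart, ?_⟩
  rw [ofPolynomial, RingHom.comp_apply, Polynomial.coeToPowerSeries.ringHom_apply, ← htrunc,
    single_order_mul_powerSeriesPart]

/-- The value at `t = 1` of a Laurent polynomial; `∑ᶠ` makes it `0` when the support is
infinite. -/
noncomputable def coeffSum (x : LaurentSeries R) : R := ∑ᶠ n, x.coeff n

lemma coeffSum_single_one_mul (n : ℤ) (x : LaurentSeries R) :
    coeffSum (single n 1 * x) = coeffSum x := by
  simp only [coeffSum, coeff_single_mul, one_mul]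
  exact finsum_comp_equiv (Equiv.subRight n)

lemma coeffSum_ofPolynomial (q : R[X]) : coeffSum (ofPolynomial q) = q.eval 1 := by
  rw [coeffSum, finsum_eq_sum_of_support_subset _ (support_ofPolynomial_subset q),
    Finset.sum_map, Polynomial.eval_eq_sum, Polynomial.sum_def]
  simp [ofPolynomial_coeff_natCast]

lemma coeffSum_mul {x y : LaurentSeries R} (hx : x.support.Finite) (hy : y.support.Finite) :
    coeffSum (x * y) = coeffSum x * coeffSum y := by
  obtain ⟨m, q, rfl⟩ := exists_eq_single_mul_ofPolynomial hx
  obtain ⟨n, r, rfl⟩ := exists_eq_single_mul_ofPolynomial hy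
  have : single m 1 * ofPolynomial q * (single n 1 * ofPolynomial r) =
      single m 1 * (single n 1 * ofPolynomial (q * r)) := by
    rw [map_mul]; ring
  simp only [this, coeffSum_single_one_mul, coeffSum_ofPolynomial, Polynomial.eval_mul]

lemma exists_eq_one_sub_single_mul {x : LaurentSeries R} (hx : x.support.Finite)
    (h : coeffSum x = 0) : ∃ y : LaurentSeries R, y.support.Finite ∧ x = (1 - single 1 1) * y := by
  obtain ⟨n, q, rfl⟩ := exists_eq_single_mul_ofPolynomial hx
  rw [coeffSum_single_one_mul, coeffSum_ofPolynomial] at h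
  obtain ⟨r, rfl⟩ := Polynomial.dvd_iff_isRoot.mpr h
  refine ⟨single n 1 * ofPolynomial (-r), support_finite_single_mul_ofPolynomial n (-r), ?_⟩
  rw [← ofPolynomial_one_sub_X]
  simp only [map_mul, map_neg, map_sub, map_one]
  ring

lemma exists_eq_one_sub_single_pow_mul_of_mul_eq [IsDomain R] {p χ s : LaurentSeries R}
    (hp : p.support.Finite) (hp1 : coeffSum p ≠ 0) (hχ : χ.support.Finite)
    (hs : s.support.Finite) {k : ℕ} (h : χ * p = (1 - single 1 1) ^ k * s) :
    ∃ χt : LaurentSeries R, χt.support.Finite ∧ χ = (1 - single 1 1) ^ k * χt := by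
  induction k generalizing χ with
  | zero => exact ⟨χ, hχ, by rw [pow_zero, one_mul]⟩
  | succ k ih =>
    have hu : (1 - single 1 1 : LaurentSeries R) ^ (k + 1) =
        ofPolynomial ((1 - Polynomial.X) ^ (k + 1)) := by
      rw [map_pow, ofPolynomial_one_sub_X]
    have hχ1 : coeffSum χ = 0 := by
      have := coeffSum_mul hχ hp
      rw [h, hu, coeffSum_mul (support_ofPolynomial_finite _) hs, coeffSum_ofPolynomial] at this
      simpa [hp1] using this.symm
    obtain ⟨χ₁, hχ₁, rfl⟩ := exists_eq_one_sub_single_mul hχ hχ1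
    have hne : (1 - single 1 1 : LaurentSeries R) ≠ 0 :=
      ne_of_apply_ne (fun x => x.coeff 0) (by simp)
    obtain ⟨χt, hχt, rfl⟩ :=
      ih hχ₁ (mul_left_cancel₀ hne (by rw [← mul_assoc, h, pow_succ']; ring))
    exact ⟨χt, hχt, by ring⟩

end LaurentSeries

theorem stmt7_general (R₀ : Type*) [CommRing R₀]
    (A : Type*) [CommRing A] [Algebra R₀ A]
    (𝒜 : ℤ → Submodule R₀ A) [GradedAlgebra 𝒜] (h𝒜 : ∀ i < (0 : ℤ), 𝒜 i = ⊥)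
    (M : Type*) [AddCommGroup M] [Module A M] [Module R₀ M] [IsScalarTower R₀ A M]
    (ℳ : ℤ → Submodule R₀ M) [SetLike.GradedSMul 𝒜 ℳ] [DirectSum.Decomposition ℳ]
    (L : ℕ) (hL : moduleLength A M = ((L : ℕ∞) : WithBot ℕ∞))
    (d : ℕ)
    (ℓM : ℤ → ℕ)
    (hℓM : ∀ n, moduleLength R₀ (ℳ n) = ((ℓM n : ℕ∞) : WithBot ℕ∞))
    (PA PM : LaurentSeries ℤ)
    (hPM : ∀ n, PM.coeff n = (ℓM n : ℤ))
    (p g : LaurentSeries ℤ) (hpfin : p.support.Finite) (hgfin : g.support.Finite)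
    (hp1 : (∑ᶠ n, p.coeff n) ≠ 0)
    (hPAp : PA * ((1 - HahnSeries.single (1 : ℤ) (1 : ℤ)) ^ d * g) = p)
    (χ : LaurentSeries ℤ) (hχfin : χ.support.Finite) (hχ : PM = χ * PA) :
    ∃ χt : LaurentSeries ℤ, χt.support.Finite ∧
      χ = (1 - HahnSeries.single (1 : ℤ) (1 : ℤ)) ^ d * χt := by
  have hfin : IsFiniteLength A M := by
    rw [← Module.length_ne_top_iff, ← WithBot.coe_inj.ne, ← moduleLength_eq_coe_length, hL]
    exact_mod_cast ENat.natCast_ne_top L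
  obtain ⟨_, _⟩ := isFiniteLength_iff_isNoetherian_isArtinian.mp hfin
  have hPMfin : PM.support.Finite := by
    refine (finite_setOf_ne_bot ℳ h𝒜).subset fun n hn hbot => hn ?_
    have h := hℓM n
    rw [hbot, moduleLength_eq_coe_length, Module.length_eq_zero] at h
    rw [hPM, show ℓM n = 0 by exact_mod_cast h.symm, Nat.cast_zero]
  have hχp : χ * p = (1 - single 1 1) ^ d * (PM * g) := by
    rw [← hPAp, hχ]; ring
  exact LaurentSeries.exists_eq_one_sub_single_pow_mul_of_mul_eq hpfin hp1 hχfin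
    (LaurentSeries.support_finite_mul hPMfin hgfin) hχp

/-- Let `A` be a graded ring of characteristic `p > 0` and dimension `d`
(Noetherian, finitely generated over an Artinian local ring `R₀`), and `M` a finitely
generated graded `A`-module with `λ_A(M) < ∞` and `pd_A(M) < ∞`.  Write
`P_A(t) = p(t)/((1-t)^d g(t))` with `p(1) ≠ 0` and `g(1) ≠ 0`, and let
`χ(t) = P_M(t)/P_A(t)` (a Laurent polynomial).  Then `(1-t)^d` divides `χ(t)` in
`ℤ[t, t⁻¹]`, i.e. `χ = (1-t)^d ⬝ χ̃` for some Laurent polynomial `χ̃`. -/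
theorem stmt7 (R₀ : Type*) [CommRing R₀] [IsArtinianRing R₀] [IsLocalRing R₀]
    (A : Type*) [CommRing A] [Algebra R₀ A] [IsNoetherianRing A] [Algebra.FiniteType R₀ A]
    (p₀ : ℕ) (hp₀ : p₀.Prime) [CharP A p₀]
    (𝒜 : ℤ → Submodule R₀ A) [GradedAlgebra 𝒜] (h𝒜 : ∀ i < (0 : ℤ), 𝒜 i = ⊥)
    (M : Type*) [AddCommGroup M] [Module A M] [Module R₀ M] [IsScalarTower R₀ A M]
    [Module.Finite A M]
    (ℳ : ℤ → Submodule R₀ M) [SetLike.GradedSMul 𝒜 ℳ] [DirectSum.Decomposition ℳ]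
    (L : ℕ) (hL : moduleLength A M = ((L : ℕ∞) : WithBot ℕ∞))
    (hpd : HasFiniteFreeResolution A M)
    (d : ℕ) (hd : ringKrullDim A = d)
    (ℓA ℓM : ℤ → ℕ)
    (hℓA : ∀ n, moduleLength R₀ (𝒜 n) = ((ℓA n : ℕ∞) : WithBot ℕ∞))
    (hℓM : ∀ n, moduleLength R₀ (ℳ n) = ((ℓM n : ℕ∞) : WithBot ℕ∞))
    (PA PM : LaurentSeries ℤ)
    (hPA : ∀ n, PA.coeff n = (ℓA n : ℤ)) (hPM : ∀ n, PM.coeff n = (ℓM n : ℤ))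
    (p g : LaurentSeries ℤ) (hpfin : p.support.Finite) (hgfin : g.support.Finite)
    (hp1 : (∑ᶠ n, p.coeff n) ≠ 0) (hg1 : (∑ᶠ n, g.coeff n) ≠ 0)
    (hPAp : PA * ((1 - HahnSeries.single (1 : ℤ) (1 : ℤ)) ^ d * g) = p)
    (χ : LaurentSeries ℤ) (hχfin : χ.support.Finite) (hχ : PM = χ * PA) :
    ∃ χt : LaurentSeries ℤ, χt.support.Finite ∧
      χ = (1 - HahnSeries.single (1 : ℤ) (1 : ℤ)) ^ d * χt :=
  stmt7_general R₀ A 𝒜 h𝒜 M ℳ L hL d ℓM hℓM PA PM hPM p g hpfin hgfin hp1 hPAp χ hχfin hχ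
end

section
/- Let R = k[x_1,...,x_d] be a polynomial ring over a field k of characteristic p > 0, graded with each variable of degree 1, and let I be a homogeneous ideal with dim_k(R/I) < ∞. Then for every q = p^e, dim_k(R/I^{[q]}) = q^d · dim_k(R/I). -/
open MvPolynomial

/-- The Frobenius power `I^{[q]}` of an ideal: the ideal generated by the `q`-th powers of
the elements of `I`. -/
def Ideal.frobPow {R : Type*} [CommRing R] (I : Ideal R) (q : ℕ) : Ideal R :=
  Ideal.span ((fun a => a ^ q) '' (I : Set R))

/-- An ideal of the polynomial ring is homogeneous (w.r.t. the standard grading) if it is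
stable under taking homogeneous components. -/
def MvPolynomial.IdealIsHomogeneous {k : Type*} [CommRing k] {σ : Type*}
    (I : Ideal (MvPolynomial σ k)) : Prop :=
  ∀ a ∈ I, ∀ n : ℕ, homogeneousComponent n a ∈ I

/-! Write `q = p ^ e`. Every monomial is uniquely `x ^ r * (x ^ b) ^ q` with `r < q` componentwise,
so if the `v t` lift a `k`-basis of `R ⧸ I`, the classes of `x ^ r * v t ^ q` span `R ⧸ I^{[q]}`:
`g ≡ ∑ c t • v t [mod I]` gives `g ^ q ≡ ∑ (c t) ^ q • v t ^ q [mod I^{[q]}]`. They are also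
independent, so they form a basis indexed by `(σ → Fin q) × ι`, whence the factor `q ^ d`.

For independence, take an additive `μ : k → k` with `μ (a * x ^ q) = μ a * x` (a `k^q`-linear
functional followed by the inverse of Frobenius). The additive map sending `f` to
`∑ m, μ (coeff (q • m + r) f) • x ^ m` satisfies `f * a ^ q ↦ (image of f) * a`, hence maps
`I^{[q]}` into `I`, and kills `x ^ r' * v t ^ q` unless `r' = r`; it turns a relation among the
`x ^ r * v t ^ q` modulo `I^{[q]}` into one among the `v t` modulo `I`. -/

namespace Finsupp

variable {σ : Type*} {q : ℕ} {r s m : σ →₀ ℕ}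

lemma smul_le_smul_add_iff (hr : ∀ i, r i < q) : q • s ≤ q • m + r ↔ s ≤ m := by
  simp only [le_def, add_apply, smul_apply, smul_eq_mul]
  refine forall_congr' fun i => ⟨fun h => ?_, fun h => ?_⟩
  · have : q * s i < q * (m i + 1) := by linarith [hr i]
    exact Nat.lt_succ_iff.mp (Nat.lt_of_mul_lt_mul_left this)
  · nlinarith

lemma smul_add_injective (q : ℕ) [NeZero q] (r : σ →₀ ℕ) :
    Function.Injective fun m : σ →₀ ℕ => q • m + r :=
  (add_left_injective r).comp (smul_right_injective _ (NeZero.ne q))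

lemma eq_smul_add_iff (hs : ∀ i, s i < q) : s = q • m + r ↔ m = 0 ∧ s = r := by
  refine ⟨fun h => ?_, fun ⟨hm, hs⟩ => by simp [hm, hs]⟩
  have hm : m = 0 := by
    ext i
    have h' := DFunLike.congr_fun h i
    simp only [add_apply, smul_apply, smul_eq_mul] at h'
    have := hs i
    simp only [coe_zero, Pi.zero_apply]
    by_contra hmi
    nlinarith [Nat.one_le_iff_ne_zero.2 hmi]
  simpa [hm] using h

section Finite

variable [Finite σ]

noncomputable def ofFin (r : σ → Fin q) : σ →₀ ℕ :=
  equivFunOnFinite.symm fun i => r i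

@[simp]
lemma ofFin_apply (r : σ → Fin q) (i : σ) : ofFin r i = r i := rfl

lemma ofFin_lt (r : σ → Fin q) (i : σ) : ofFin r i < q := (r i).isLt

lemma ofFin_injective : Function.Injective (ofFin : (σ → Fin q) → σ →₀ ℕ) :=
  fun _ _ h => funext fun i => Fin.ext (DFunLike.congr_fun h i)

lemma exists_eq_ofFin_add_smul [NeZero q] (b : σ →₀ ℕ) :
    ∃ (r : σ → Fin q) (b' : σ →₀ ℕ), b = ofFin r + q • b' :=
  ⟨fun i => ⟨b i % q, Nat.mod_lt _ (NeZero.pos q)⟩, b.mapRange (· / q) (Nat.zero_div q),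
    by ext i; simp [Nat.mod_add_div]⟩

end Finite

end Finsupp

namespace Ideal

variable {R : Type*} [CommRing R] (I : Ideal R)

lemma pow_mem_frobPow {a : R} (ha : a ∈ I) (q : ℕ) : a ^ q ∈ I.frobPow q :=
  subset_span ⟨a, ha, rfl⟩

lemma pow_sub_pow_mem_frobPow (p : ℕ) [ExpChar R p] (e : ℕ) {a b : R} (h : a - b ∈ I) :
    a ^ p ^ e - b ^ p ^ e ∈ I.frobPow (p ^ e) :=
  sub_pow_expChar_pow a b e (p := p) ▸ I.pow_mem_frobPow h _

end Ideal

lemma exists_addMonoidHom_map_mul_pow_ne_zero {k : Type*} [Field k] (p : ℕ) [ExpChar k p]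
    (e : ℕ) {c : k} (hc : c ≠ 0) :
    ∃ μ : k →+ k, (∀ a x, μ (a * x ^ p ^ e) = μ a * x) ∧ μ c ≠ 0 := by
  let ψ := (iterateFrobenius k p e).rangeRestrictFieldEquiv
  obtain ⟨l, hl⟩ : ∃ l : Module.Dual (iterateFrobenius k p e).fieldRange k, l c ≠ 0 := by
    by_contra! h
    exact hc ((Module.forall_dual_apply_eq_zero_iff _ c).1 h)
  refine ⟨ψ.symm.toAddMonoidHom.comp l.toAddMonoidHom, fun a x => ?_, by simpa using hl⟩
  have : a * x ^ p ^ e = ψ x • a := by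
    rw [Subfield.smul_def, smul_eq_mul, RingHom.rangeRestrictFieldEquiv_apply_coe,
      iterateFrobenius_def, mul_comm]
  simp [this, mul_comm]

namespace MvPolynomial

section Cartier

variable {σ k : Type*} [CommSemiring k]

noncomputable def cartierMap (μ : k →+ k) (q : ℕ) [NeZero q] (r₀ : σ →₀ ℕ) :
    MvPolynomial σ k →+ MvPolynomial σ k :=
  AddMonoidAlgebra.coeffAddEquiv.symm.toAddMonoidHom.comp <|
    (Finsupp.mapRange.addMonoidHom μ).comp <|
      (Finsupp.comapDomain.addMonoidHom (Finsupp.smul_add_injective q r₀)).comp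
        AddMonoidAlgebra.coeffAddEquiv.toAddMonoidHom

variable {μ : k →+ k} {q : ℕ} [NeZero q] {r₀ : σ →₀ ℕ}

@[simp]
lemma coeff_cartierMap (f : MvPolynomial σ k) (m : σ →₀ ℕ) :
    coeff m (cartierMap μ q r₀ f) = μ (coeff (q • m + r₀) f) := rfl

lemma cartierMap_mul_monomial (hμ : ∀ a x, μ (a * x ^ q) = μ a * x) (hr₀ : ∀ i, r₀ i < q)
    (f : MvPolynomial σ k) (s : σ →₀ ℕ) (c : k) :
    cartierMap μ q r₀ (f * monomial (q • s) (c ^ q)) = cartierMap μ q r₀ f * monomial s c := by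
  ext m
  rw [coeff_cartierMap, coeff_mul_monomial', coeff_mul_monomial']
  by_cases h : s ≤ m
  · have : q • m + r₀ - q • s = q • (m - s) + r₀ := by
      ext i
      have := h i
      simp only [Finsupp.tsub_apply, Finsupp.add_apply, Finsupp.smul_apply, smul_eq_mul,
        Nat.mul_sub]
      have := Nat.mul_le_mul_left q this
      omega
    rw [if_pos h, if_pos ((Finsupp.smul_le_smul_add_iff hr₀).2 h), hμ, coeff_cartierMap, this]
  · rw [if_neg h, if_neg (mt (Finsupp.smul_le_smul_add_iff hr₀).1 h), map_zero]

lemma cartierMap_monomial [DecidableEq σ] {r : σ →₀ ℕ} (hr : ∀ i, r i < q) (c : k) :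
    cartierMap μ q r₀ (monomial r c) = if r = r₀ then C (μ c) else 0 := by
  ext m
  simp only [coeff_cartierMap, coeff_monomial, Finsupp.eq_smul_add_iff hr]
  split_ifs <;> simp_all [coeff_C, eq_comm]

end Cartier

section CharP

variable {σ k : Type*} [CommRing k] {p : ℕ} [Fact p.Prime] [CharP k p] {e : ℕ}
  {μ : k →+ k} {r₀ : σ →₀ ℕ}

lemma cartierMap_mul_pow (hμ : ∀ a x, μ (a * x ^ p ^ e) = μ a * x) (hr₀ : ∀ i, r₀ i < p ^ e)
    (f a : MvPolynomial σ k) :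
    cartierMap μ (p ^ e) r₀ (f * a ^ p ^ e) = cartierMap μ (p ^ e) r₀ f * a := by
  induction a using MvPolynomial.induction_on' with
  | monomial s c => rw [monomial_pow, cartierMap_mul_monomial hμ hr₀]
  | add a b ha hb => rw [add_pow_char_pow, mul_add, map_add, ha, hb, mul_add]

lemma cartierMap_monomial_mul_pow [DecidableEq σ] (hμ : ∀ a x, μ (a * x ^ p ^ e) = μ a * x)
    (hr₀ : ∀ i, r₀ i < p ^ e) {r : σ →₀ ℕ} (hr : ∀ i, r i < p ^ e) (c : k)
    (a : MvPolynomial σ k) :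
    cartierMap μ (p ^ e) r₀ (monomial r c * a ^ p ^ e) = if r = r₀ then C (μ c) * a else 0 := by
  rw [cartierMap_mul_pow hμ hr₀, cartierMap_monomial hr, ite_mul, zero_mul]

lemma cartierMap_mem_of_mem_frobPow {I : Ideal (MvPolynomial σ k)}
    (hμ : ∀ a x, μ (a * x ^ p ^ e) = μ a * x) (hr₀ : ∀ i, r₀ i < p ^ e)
    {f : MvPolynomial σ k} (hf : f ∈ I.frobPow (p ^ e)) : cartierMap μ (p ^ e) r₀ f ∈ I := by
  suffices ∀ g, cartierMap μ (p ^ e) r₀ (g * f) ∈ I by simpa using this 1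
  induction hf using Submodule.span_induction with
  | mem _ h =>
    obtain ⟨a, ha, rfl⟩ := h
    exact fun g => cartierMap_mul_pow hμ hr₀ g a ▸ I.mul_mem_left _ ha
  | zero => simp
  | add x y _ _ hx hy => exact fun g => by rw [mul_add, map_add]; exact I.add_mem (hx g) (hy g)
  | smul b x _ hx => exact fun g => by rw [smul_eq_mul, ← mul_assoc]; exact hx (g * b)

end CharP

section Quotient

variable {σ k ι : Type*} [Finite σ]

noncomputable def frobPowFamily [CommRing k] (q : ℕ) (I : Ideal (MvPolynomial σ k))
    (v : ι → MvPolynomial σ k) : (σ → Fin q) × ι → MvPolynomial σ k ⧸ I.frobPow q :=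
  fun rt => Ideal.Quotient.mk _ (monomial (Finsupp.ofFin rt.1) 1 * v rt.2 ^ q)

variable [Field k] {p : ℕ} [Fact p.Prime] [CharP k p] {e : ℕ} {I : Ideal (MvPolynomial σ k)}
  {v : ι → MvPolynomial σ k}

lemma linearIndependent_frobPowFamily (hv : LinearIndependent k (Ideal.Quotient.mk I ∘ v)) :
    LinearIndependent k (frobPowFamily (p ^ e) I v) := by
  classical
  rw [linearIndependent_iff']
  rintro s g hg ⟨r, t⟩ hrt
  by_contra hne
  obtain ⟨μ, hμ, hμne⟩ := exists_addMonoidHom_map_mul_pow_ne_zero p e hne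
  have hmem : ∑ i ∈ s, monomial (Finsupp.ofFin i.1) (g i) * v i.2 ^ p ^ e ∈ I.frobPow (p ^ e) := by
    rw [← Ideal.Quotient.eq_zero_iff_mem, ← hg, map_sum]
    refine Finset.sum_congr rfl fun i _ => ?_
    rw [frobPowFamily, ← Ideal.Quotient.mkₐ_eq_mk k, ← map_smul, smul_eq_C_mul, ← mul_assoc,
      C_mul_monomial, mul_one]
  have hslice := cartierMap_mem_of_mem_frobPow hμ (Finsupp.ofFin_lt r) hmem
  simp only [map_sum, cartierMap_monomial_mul_pow hμ (Finsupp.ofFin_lt r) (Finsupp.ofFin_lt _),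
    Finsupp.ofFin_injective.eq_iff, ← Finset.sum_filter] at hslice
  set T := (s.filter (·.1 = r)).image Prod.snd
  have hinj : Set.InjOn Prod.snd (s.filter (·.1 = r) : Set ((σ → Fin (p ^ e)) × ι)) := by
    intro i hi j hj h
    rw [Finset.coe_filter] at hi hj
    exact Prod.ext (hi.2.trans hj.2.symm) h
  have hT : ∑ t ∈ T, μ (g (r, t)) • (Ideal.Quotient.mk I ∘ v) t = 0 := by
    rw [Finset.sum_image hinj, ← Ideal.Quotient.eq_zero_iff_mem.2 hslice, map_sum]
    refine Finset.sum_congr rfl fun i hi => ?_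
    rw [← (Finset.mem_filter.1 hi).2, Function.comp_apply, ← Ideal.Quotient.mkₐ_eq_mk k,
      ← map_smul, smul_eq_C_mul]
  exact hμne (linearIndependent_iff'.1 hv T _ hT t
    (Finset.mem_image.2 ⟨(r, t), Finset.mem_filter.2 ⟨hrt, rfl⟩, rfl⟩))

lemma mk_monomial_mul_pow_mem_span_frobPowFamily
    (hv : Submodule.span k (Set.range (Ideal.Quotient.mk I ∘ v)) = ⊤) (r : σ → Fin (p ^ e))
    (c : k) (g : MvPolynomial σ k) :
    Ideal.Quotient.mk (I.frobPow (p ^ e)) (monomial (Finsupp.ofFin r) c * g ^ p ^ e) ∈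
      Submodule.span k (Set.range (frobPowFamily (p ^ e) I v)) := by
  obtain ⟨l, hl⟩ := Finsupp.mem_span_range_iff_exists_finsupp.1
    (hv ▸ Submodule.mem_top : Ideal.Quotient.mk I g ∈ _)
  have hg' : Ideal.Quotient.mk I (l.sum fun t a => a • v t) = Ideal.Quotient.mk I g := by
    rw [← hl, ← Ideal.Quotient.mkₐ_eq_mk k, map_finsuppSum]
    simp only [map_smul, Function.comp_apply, Ideal.Quotient.mkₐ_eq_mk]
  have hpow : Ideal.Quotient.mk (I.frobPow (p ^ e)) (monomial (Finsupp.ofFin r) c * g ^ p ^ e) =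
      Ideal.Quotient.mk (I.frobPow (p ^ e))
        (monomial (Finsupp.ofFin r) c * (l.sum fun t a => a • v t) ^ p ^ e) := by
    rw [Ideal.Quotient.eq, ← mul_sub]
    exact Ideal.mul_mem_left _ _ (I.pow_sub_pow_mem_frobPow p e (Ideal.Quotient.eq.1 hg'.symm))
  rw [hpow, Finsupp.sum, sum_pow_char_pow, Finset.mul_sum, map_sum]
  refine Submodule.sum_mem _ fun t _ => ?_
  have : monomial (Finsupp.ofFin r) c * (l t • v t) ^ p ^ e =
      (c * l t ^ p ^ e) • (monomial (Finsupp.ofFin r) 1 * v t ^ p ^ e) := by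
    rw [smul_pow, smul_eq_C_mul, smul_eq_C_mul, map_mul, mul_mul_mul_comm, C_mul_monomial,
      mul_one]
  rw [this, ← Ideal.Quotient.mkₐ_eq_mk k, map_smul]
  exact Submodule.smul_mem _ _ (Submodule.subset_span ⟨(r, t), rfl⟩)

lemma span_frobPowFamily (hv : Submodule.span k (Set.range (Ideal.Quotient.mk I ∘ v)) = ⊤) :
    Submodule.span k (Set.range (frobPowFamily (p ^ e) I v)) = ⊤ := by
  rw [eq_top_iff]
  rintro x -
  obtain ⟨f, rfl⟩ := Ideal.Quotient.mk_surjective x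
  induction f using MvPolynomial.induction_on' with
  | monomial b c =>
    obtain ⟨r, b', rfl⟩ := Finsupp.exists_eq_ofFin_add_smul (q := p ^ e) b
    rw [← mul_one c, ← one_pow (p ^ e), ← monomial_mul, ← monomial_pow, ← smul_eq_mul]
    exact mk_monomial_mul_pow_mem_span_frobPowFamily hv r c _
  | add f g hf hg => rw [map_add]; exact Submodule.add_mem _ hf hg

noncomputable def quotientFrobPowBasis (b : Module.Basis ι k (MvPolynomial σ k ⧸ I)) :
    Module.Basis ((σ → Fin (p ^ e)) × ι) k (MvPolynomial σ k ⧸ I.frobPow (p ^ e)) :=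
  have hb : Ideal.Quotient.mk I ∘ Function.surjInv Ideal.Quotient.mk_surjective ∘ b = b := by
    ext t; exact Function.surjInv_eq _ _
  .mk (linearIndependent_frobPowFamily (hb ▸ b.linearIndependent))
    (span_frobPowFamily (by rw [hb, b.span_eq])).ge

variable (p e I) in
theorem finrank_quotient_frobPow :
    Module.finrank k (MvPolynomial σ k ⧸ I.frobPow (p ^ e)) =
      (p ^ e) ^ Nat.card σ * Module.finrank k (MvPolynomial σ k ⧸ I) := by
  let b := Module.Basis.ofVectorSpace k (MvPolynomial σ k ⧸ I)
  rw [Module.finrank_eq_nat_card_basis (quotientFrobPowBasis b),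
    Module.finrank_eq_nat_card_basis b, Nat.card_prod, Nat.card_fun, Nat.card_fin]

end Quotient

end MvPolynomial

theorem stmt14_general (k : Type*) [Field k] (p : ℕ) (hp : p.Prime) [CharP k p] (d e : ℕ)
    (I : Ideal (MvPolynomial (Fin d) k)) :
    Module.finrank k (MvPolynomial (Fin d) k ⧸ I.frobPow (p ^ e)) =
      (p ^ e) ^ d * Module.finrank k (MvPolynomial (Fin d) k ⧸ I) := by
  have : Fact p.Prime := ⟨hp⟩
  simpa using MvPolynomial.finrank_quotient_frobPow p e I

/-- Let `R = k[x₁,…,x_d]` over a field `k` of characteristic `p > 0`, standard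
graded, and let `I` be a homogeneous ideal with `dim_k (R/I) < ∞`.  Then for every `q = p^e`,
`dim_k (R/I^{[q]}) = q^d ⬝ dim_k (R/I)`. -/
theorem stmt14 (k : Type*) [Field k] (p : ℕ) (hp : p.Prime) [CharP k p] (d e : ℕ)
    (I : Ideal (MvPolynomial (Fin d) k)) (hIhom : MvPolynomial.IdealIsHomogeneous I)
    (hfin : FiniteDimensional k (MvPolynomial (Fin d) k ⧸ I)) :
    Module.finrank k (MvPolynomial (Fin d) k ⧸ I.frobPow (p ^ e)) =
      (p ^ e) ^ d * Module.finrank k (MvPolynomial (Fin d) k ⧸ I) :=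
  stmt14_general k p hp d e I
end
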